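/- (Rule 2) Let T be a finite tree on vertex set V, let S be a total [1,2]-set of T, and let v ∈ S be a vertex with exactly one neighbor in S. Form the graph T₂ on V ⊕ Unit by keeping all edges of T (on the left summand) and adding the single edge between (inl v) and the new vertex w = inr (). Then T₂ is a tree and (inl '' S) ∪ {w} is a total [1,2]-set of T₂. -/

import Mathlib

/-- `S` is a total `[1,2]`-set of `G`: every vertex of `G` (whether in `S` or
not) has at least one and at most two neighbors in `S`. -/
def IsTotalOneTwoSet {V : Type*} (G : SimpleGraph V) (S : Set V) : Prop :=
  ∀ v : V, 1 ≤ (G.neighborSet v ∩ S).ncard ∧ (G.neighborSet v ∩ S).ncard ≤ 2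

/-- The graph obtained from `T` by adding one new vertex `Sum.inr ()` joined
to `v` by a single edge. -/
def addLeaf {V : Type*} (T : SimpleGraph V) (v : V) : SimpleGraph (V ⊕ Unit) :=
  T.map (⟨Sum.inl, Sum.inl_injective⟩ : V ↪ V ⊕ Unit) ⊔
    SimpleGraph.fromEdgeSet {s(Sum.inl v, Sum.inr ())}

/-!
Joining a new vertex `w` to `v` adds a single edge between vertices that were not reachable from
each other, so the tree stays connected and acyclic. Only two neighbourhoods meet the new set
`S ∪ {w}` differently from `S`: the new vertex sees exactly `v ∈ S`, and `v` gains `w`, raising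
its count from `1` to `2`.
-/

open SimpleGraph

namespace SimpleGraph

variable {V W : Type*} {G : SimpleGraph V}

theorem Reachable.of_map {f : V ↪ W} {u v : V} (h : (G.map f).Reachable (f u) (f v)) :
    G.Reachable u v := by
  obtain ⟨p⟩ := h
  suffices ∀ {x y} (p : (G.map f).Walk x y) (u v : V), f u = x → f v = y → G.Reachable u v
    from this p u v rfl rfl
  intro x y p
  induction p with
  | nil => intro u v hu hv; exact f.injective (hu.trans hv.symm) ▸ .rfl
  | cons hadj p ih =>
    rintro u v rfl rfl
    obtain ⟨a, b, hab, ha, rfl⟩ := (map_adj f G _ _).1 hadj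
    exact f.injective ha ▸ hab.reachable.trans (ih b v rfl rfl)

theorem map_deleteEdges_singleton (f : V ↪ W) (u v : V) :
    (G.map f).deleteEdges {s(f u, f v)} = (G.deleteEdges {s(u, v)}).map f := by
  ext x y
  simp only [deleteEdges_adj, map_adj, Set.mem_singleton_iff]
  constructor
  · rintro ⟨⟨a, b, hab, rfl, rfl⟩, hne⟩
    exact ⟨a, b, ⟨hab, fun h => hne (by simpa using congrArg (Sym2.map f) h)⟩, rfl, rfl⟩
  · rintro ⟨a, b, ⟨hab, hne⟩, rfl, rfl⟩
    refine ⟨⟨a, b, hab, rfl, rfl⟩, fun h => hne (Sym2.map.injective f.injective ?_)⟩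
    simpa using h

theorem IsAcyclic.map (f : V ↪ W) (h : G.IsAcyclic) : (G.map f).IsAcyclic := by
  rw [isAcyclic_iff_forall_adj_isBridge] at h ⊢
  intro x y hxy
  obtain ⟨a, b, hab, rfl, rfl⟩ := (map_adj f G x y).1 hxy
  rw [isBridge_iff, map_deleteEdges_singleton]
  exact fun hr => isBridge_iff.1 (h hab) hr.of_map

end SimpleGraph

section addLeaf

open Function Set Sum

variable {V : Type*} {T : SimpleGraph V} {v : V}

lemma addLeaf_eq_map_sup_edge : addLeaf T v = T.map Embedding.inl ⊔ edge (inl v) (inr ()) := rfl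

@[simp] lemma addLeaf_adj_inl_inl {a b : V} : (addLeaf T v).Adj (inl a) (inl b) ↔ T.Adj a b := by
  simp [addLeaf_eq_map_sup_edge, edge_adj]

@[simp] lemma addLeaf_adj_inl_inr {a : V} {w : Unit} :
    (addLeaf T v).Adj (inl a) (inr w) ↔ a = v := by
  simp [addLeaf_eq_map_sup_edge, edge_adj]

@[simp] lemma addLeaf_adj_inr_inl {a : V} {w : Unit} :
    (addLeaf T v).Adj (inr w) (inl a) ↔ a = v := by
  rw [adj_comm, addLeaf_adj_inl_inr]

lemma neighborSet_addLeaf_inr : (addLeaf T v).neighborSet (inr ()) = {inl v} := by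
  ext (a | _) <;> simp

lemma neighborSet_addLeaf_inl_self :
    (addLeaf T v).neighborSet (inl v) = insert (inr ()) (inl '' T.neighborSet v) := by
  ext (a | _) <;> simp

lemma neighborSet_addLeaf_inl_of_ne {u : V} (hu : u ≠ v) :
    (addLeaf T v).neighborSet (inl u) = inl '' T.neighborSet u := by
  ext (a | _) <;> simp [hu]

lemma isTree_addLeaf (hT : T.IsTree) : (addLeaf T v).IsTree := by
  have hleaf : ¬(T.map Embedding.inl).Reachable (inl v) (inr ()) :=
    not_reachable_of_neighborSet_right_eq_empty (by simp) (by ext (a | _) <;> simp)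
  refine ⟨(connected_iff _).2 ⟨?_, ⟨inl v⟩⟩,
    (hT.isAcyclic.map _).sup_edge_of_not_reachable hleaf⟩
  suffices h : ∀ x, (addLeaf T v).Reachable x (inl v) from fun x y => (h x).trans (h y).symm
  rintro (u | ⟨⟩)
  · exact ((hT.connected.preconnected u v).map (Embedding.map Embedding.inl T).toHom).mono
      le_sup_left
  · exact (addLeaf_adj_inr_inl.2 rfl).reachable

lemma image_inl_inter_image_inl_union_inr (A S : Set V) :
    inl '' A ∩ (inl '' S ∪ {inr ()}) = inl '' (A ∩ S) := by
  ext (a | _) <;> simp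

lemma isTotalOneTwoSet_addLeaf {S : Set V} (hS : IsTotalOneTwoSet T S) (hv : v ∈ S)
    (hone : (T.neighborSet v ∩ S).ncard = 1) :
    IsTotalOneTwoSet (addLeaf T v) (inl '' S ∪ {inr ()}) := by
  rintro (u | ⟨⟩)
  · by_cases hu : u = v
    · subst hu
      have hfin : (T.neighborSet u ∩ S).Finite := finite_of_ncard_ne_zero (by omega)
      rw [neighborSet_addLeaf_inl_self, insert_inter_of_mem (by simp),
        image_inl_inter_image_inl_union_inr, ncard_insert_of_notMem (by simp) (hfin.image _),
        ncard_image_of_injective _ inl_injective, hone]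
      simp
    · rw [neighborSet_addLeaf_inl_of_ne hu, image_inl_inter_image_inl_union_inr,
        ncard_image_of_injective _ inl_injective]
      exact hS u
  · rw [neighborSet_addLeaf_inr, singleton_inter_of_mem (by simpa using hv), ncard_singleton]
    simp

end addLeaf

theorem rule2_addBlackLeaf_totalOneTwoSet_general {V : Type*}
    (T : SimpleGraph V) (hT : T.IsTree)
    (S : Set V) (hS : IsTotalOneTwoSet T S)
    (v : V) (hv : v ∈ S) (hone : (T.neighborSet v ∩ S).ncard = 1) :
    (addLeaf T v).IsTree ∧
    IsTotalOneTwoSet (addLeaf T v) (Sum.inl '' S ∪ {Sum.inr ()}) :=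
  ⟨isTree_addLeaf hT, isTotalOneTwoSet_addLeaf hS hv hone⟩

theorem rule2_addBlackLeaf_totalOneTwoSet {V : Type*} [Fintype V]
    (T : SimpleGraph V) (hT : T.IsTree)
    (S : Set V) (hS : IsTotalOneTwoSet T S)
    (v : V) (hv : v ∈ S) (hone : (T.neighborSet v ∩ S).ncard = 1) :
    (addLeaf T v).IsTree ∧
    IsTotalOneTwoSet (addLeaf T v) (Sum.inl '' S ∪ {Sum.inr ()}) :=
  rule2_addBlackLeaf_totalOneTwoSet_general T hT S hS v hv hone
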